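/- Let 1 ≤ d₁ < d₂ ≤ 2(q−1) and let k₁ = dim RM_{d₁−1}(q,2). If d₁ ≡ d₂ (mod q−1), then dim(PRM_{d₁}(q,2) ∩ PRM_{d₂}(q,2)) = dim PRM_{d₁}(q,2). If d₁ ≢ d₂ (mod q−1), then dim(PRM_{d₁}(q,2) ∩ PRM_{d₂}(q,2)) equals: k₁ if d₂ ≤ q−1; k₁ + min{d₁, d₂−(q−1)} if d₁ ≤ q−1 < d₂; and k₁ + d₂ − q + 2 if q ≤ d₁. -/

import Mathlib

open MvPolynomial

/-- The fixed representatives of the points of the projective plane over `F`: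
the leftmost nonzero coordinate equals 1. -/
def stdRep (F : Type*) [Field F] : Set (Fin 3 → F) :=
  {v | v 0 = 1 ∨ (v 0 = 0 ∧ v 1 = 1) ∨ (v 0 = 0 ∧ v 1 = 0 ∧ v 2 = 1)}

/-- The evaluation map at the fixed representatives. -/
noncomputable def ev (F : Type*) [Field F] :
    MvPolynomial (Fin 3) F →ₗ[F] (stdRep F → F) :=
  LinearMap.pi fun Q => (aeval (Q : Fin 3 → F)).toLinearMap

/-- The projective Reed–Muller code of degree `d` over the projective plane. -/
noncomputable def PRM (F : Type*) [Field F] (d : ℕ) : Submodule F (stdRep F → F) :=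
  (homogeneousSubmodule (Fin 3) F d).map (ev F)

/-- Evaluation of bivariate polynomials at all points of the affine plane. -/
noncomputable def evA (F : Type*) [Field F] :
    MvPolynomial (Fin 2) F →ₗ[F] ((Fin 2 → F) → F) :=
  LinearMap.pi fun Q => (aeval Q).toLinearMap

/-- The affine Reed–Muller code of degree `e` in two variables. -/
noncomputable def RM (F : Type*) [Field F] (e : ℕ) : Submodule F ((Fin 2 → F) → F) :=
  (restrictTotalDegree (Fin 2) F e).map (evA F)

/-!
Split the points of `ℙ²` into the affine chart `x₀ = 1`, a copy of `F²`, and the line `x₀ = 0`,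
a copy of `ℙ¹`. A function on `ℙ²` lies in `PRM_d` iff it is given on the chart by some `g` of
total degree `≤ d` and on the line by the top component `g_d`. The functions in
`PRM_{d₁} ∩ PRM_{d₂}` vanishing on the line are exactly `RM_{d₁-1}` on the chart, so the
dimension is `dim RM_{d₁-1}` plus that of the restrictions to the line.

The representatives `g₁, g₂` of a function in the intersection agree on `F²`, so by the
Combinatorial Nullstellensatz `g₂ - g₁ = (X₀^q - X₀) h₀ + (X₁^q - X₁) h₁`; as `x^q = x` on `F`,
the top component of `g₂` agrees on `F²` with the form `X₀ (h₀)_{d₂-q} + X₁ (h₁)_{d₂-q}` of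
degree `d₂ - (q - 1)`. Conversely, every form of that degree is reached by adding a polynomial
vanishing on `F²`. Hence the restrictions to the line form `PRM_{d₁}(ℙ¹) ∩ PRM_{d₂-(q-1)}(ℙ¹)`
(`lineCode`; zero if `d₂ < q`), whose dimension is read off from univariate polynomials of
bounded degree. In the congruent case, multiplying each monomial by `x_i ^ (q - 1)` for a
variable `x_i` it contains shows `PRM_{d₁} ⊆ PRM_{d₂}`.
-/

theorem Submodule.finrank_map_add_finrank_inf_ker {K V W : Type*} [DivisionRing K]
    [AddCommGroup V] [Module K V] [AddCommGroup W] [Module K W]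
    (f : V →ₗ[K] W) (p : Submodule K V) [FiniteDimensional K p] :
    Module.finrank K (p.map f) + Module.finrank K ↥(p ⊓ LinearMap.ker f) =
      Module.finrank K p := by
  have h := LinearMap.finrank_range_add_finrank_ker (f.domRestrict p)
  rw [LinearMap.range_domRestrict, LinearMap.ker_domRestrict] at h
  have hker : (LinearMap.ker f).comap p.subtype = (p ⊓ LinearMap.ker f).comap p.subtype := by
    ext x; simp
  rwa [hker, (Submodule.comapSubtypeEquivOfLe inf_le_left).finrank_eq] at h

namespace Polynomial

variable {R : Type*} [CommSemiring R]

theorem mem_degreeLT_succ {p : R[X]} {n : ℕ} : p ∈ degreeLT R (n + 1) ↔ p.natDegree ≤ n := by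
  rw [degreeLT_succ_eq_degreeLE, mem_degreeLE, natDegree_le_iff_degree_le]

theorem eval_homogenize_one_zero (p : R[X]) (n : ℕ) :
    MvPolynomial.eval ![1, 0] (p.homogenize n) = p.coeff n := by
  rw [homogenize, map_sum, Finset.sum_eq_single (n, 0)]
  · simp [MvPolynomial.eval_monomial, Finsupp.prod_fintype]
  · rintro ⟨k, l⟩ hkl hne
    have hl : l ≠ 0 := by rintro rfl; simp_all
    simp [MvPolynomial.eval_monomial, Finsupp.prod_fintype, hl]
  · simp

end Polynomial

namespace MvPolynomial

section CommSemiring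

variable {σ R : Type*} [CommSemiring R] {n : ℕ} {φ : MvPolynomial σ R}

@[elab_as_elim]
theorem IsHomogeneous.induction_on' {P : MvPolynomial σ R → Prop} (hφ : φ.IsHomogeneous n)
    (monomial : ∀ m c, m.degree = n → P (monomial m c))
    (add : ∀ ψ χ, P ψ → P χ → P (ψ + χ)) (zero : P 0) : P φ := by
  rw [φ.as_sum]
  refine Finset.sum_induction _ P add zero fun m hm => monomial m _ ?_
  rw [Finsupp.degree_eq_weight_one]
  exact hφ (mem_support_iff.mp hm)

theorem IsHomogeneous.eval_smul (hφ : φ.IsHomogeneous n) (c : R) (x : σ → R) :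
    eval (c • x) φ = c ^ n * eval x φ := by
  refine IsHomogeneous.induction_on' hφ (fun m a hm => ?_) (fun ψ χ hψ hχ => ?_) (by simp)
  · simp only [eval_monomial, Pi.smul_apply, smul_eq_mul, mul_pow]
    rw [Finsupp.prod_mul, Finsupp.prod, Finset.prod_pow_eq_pow_sum, ← hm, Finsupp.degree_apply]
    ring
  · simp [hψ, hχ, mul_add]

theorem homogeneousComponent_mul_of_isHomogeneous {k : ℕ} (hφ : φ.IsHomogeneous k)
    (ψ : MvPolynomial σ R) (n : ℕ) :
    homogeneousComponent (k + n) (φ * ψ) = φ * homogeneousComponent n ψ := by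
  conv_lhs => rw [← sum_homogeneousComponent ψ, Finset.mul_sum, map_sum]
  simp_rw [homogeneousComponent_of_mem (hφ.mul (homogeneousComponent_isHomogeneous _ ψ)),
    add_right_inj]
  rw [Finset.sum_ite_eq]
  split_ifs with h
  · rfl
  · rw [homogeneousComponent_eq_zero _ _ (by simpa using h), mul_zero]

theorem sum_homogeneousComponent_of_totalDegree_le {d : ℕ} (hφ : φ.totalDegree ≤ d) :
    ∑ k ∈ Finset.range (d + 1), homogeneousComponent k φ = φ := by
  conv_rhs => rw [← sum_homogeneousComponent φ]
  symm
  refine Finset.sum_subset (Finset.range_subset_range.mpr (by omega)) fun k hk hk' => ?_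
  exact homogeneousComponent_eq_zero _ _ (by simp at hk'; omega)

end CommSemiring

section FiniteField

variable {K σ : Type*} [Field K] [Fintype K]

local notation "q" => Fintype.card K

theorem prod_X_sub_C_eq_X_pow_card_sub_X (i : σ) :
    ∏ r : K, (X i - C r : MvPolynomial σ K) = X i ^ q - X i := by
  have hq : 1 < q := Fintype.one_lt_card
  have h := Polynomial.prod_multiset_X_sub_C_of_monic_of_roots_card_eq
    (Polynomial.monic_X_pow_sub (p := (Polynomial.X : Polynomial K))
      (by rw [Polynomial.degree_X]; exact_mod_cast hq))
    (by rw [FiniteField.roots_X_pow_card_sub_X, FiniteField.X_pow_card_sub_X_natDegree_eq K hq]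
        rfl)
  rw [FiniteField.roots_X_pow_card_sub_X, ← Finset.prod_eq_multiset_prod] at h
  simpa using congrArg (Polynomial.aeval (X i : MvPolynomial σ K)) h

theorem totalDegree_X_pow_card_sub_X (i : σ) :
    (X i ^ q - X i : MvPolynomial σ K).totalDegree = q := by
  rw [sub_eq_add_neg, totalDegree_add_eq_left_of_totalDegree_lt] <;>
    simp [totalDegree_X_pow, totalDegree_neg, Fintype.one_lt_card]

theorem IsHomogeneous.exists_isHomogeneous_add_card_sub_one_eval_eq {n : ℕ}
    {φ : MvPolynomial σ K} (hφ : φ.IsHomogeneous n) (hn : n ≠ 0) :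
    ∃ ψ : MvPolynomial σ K, ψ.IsHomogeneous (n + (q - 1)) ∧ ∀ x, eval x ψ = eval x φ := by
  refine IsHomogeneous.induction_on' hφ (fun m a hm => ?_) (fun ψ χ hψ hχ => ?_)
    ⟨0, isHomogeneous_zero _ _ _, by simp⟩
  · obtain ⟨i, hi⟩ : ∃ i, m i ≠ 0 := by
      by_contra! h
      exact hn (by rw [← hm, show m = 0 from Finsupp.ext h, map_zero])
    obtain ⟨s, rfl⟩ : ∃ s, m = s + Finsupp.single i 1 :=
      ⟨m - Finsupp.single i 1, (tsub_add_cancel_of_le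
        (Finsupp.single_le_iff.mpr (Nat.one_le_iff_ne_zero.mpr hi))).symm⟩
    refine ⟨monomial (s + Finsupp.single i 1) a * X i ^ (q - 1),
      (isHomogeneous_monomial a hm).mul (isHomogeneous_X_pow i _), fun x => ?_⟩
    rw [monomial_add_single, map_mul, map_mul, map_pow, map_pow, eval_X, mul_assoc, ← pow_add,
      Nat.add_sub_cancel' Fintype.card_pos, FiniteField.pow_card, pow_one]
  · obtain ⟨ψ', hψ', hψe⟩ := hψ
    obtain ⟨χ', hχ', hχe⟩ := hχ
    exact ⟨ψ' + χ', hψ'.add hχ', fun x => by simp [hψe, hχe]⟩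

theorem eq_zero_of_eval_eq_zero_of_totalDegree_lt [Finite σ] {P : MvPolynomial σ K}
    (hP : ∀ x, eval x P = 0) (hdeg : P.totalDegree < q) : P = 0 :=
  eq_zero_of_eval_zero_at_prod_finset P (fun _ => Finset.univ)
    (fun i => (degreeOf_le_totalDegree P i).trans_lt (by simpa using hdeg)) (fun x _ => hP x)

theorem exists_isHomogeneous_eval_homogeneousComponent_eq [Finite σ] {P : MvPolynomial σ K}
    (hP : ∀ x, eval x P = 0) {D : ℕ} (hPD : P.totalDegree ≤ D) (hqD : q ≤ D) :
    ∃ H : MvPolynomial σ K, H.IsHomogeneous (D - (q - 1)) ∧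
      ∀ x, eval x (homogeneousComponent D P) = eval x H := by
  obtain ⟨h, hdeg, hPh⟩ := combinatorial_nullstellensatz_exists_linearCombination
    (fun _ => Finset.univ) (fun _ => Finset.univ_nonempty) P (fun x _ => hP x)
  simp only [prod_X_sub_C_eq_X_pow_card_sub_X] at hdeg hPh
  have hq : 2 ≤ q := Fintype.one_lt_card
  have hcomp : ∀ i, homogeneousComponent D ((X i ^ q - X i) * h i)
      = X i ^ q * homogeneousComponent (D - q) (h i) := by
    intro i
    have hlow : homogeneousComponent (D - 1) (h i) = 0 := by
      rcases eq_or_ne (h i) 0 with h0 | h0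
      · rw [h0, map_zero]
      have hX : (X i ^ q - X i : MvPolynomial σ K) ≠ 0 := fun h' => by
        have := totalDegree_X_pow_card_sub_X (K := K) i
        rw [h', totalDegree_zero] at this
        omega
      apply homogeneousComponent_eq_zero
      have := (hdeg i).trans hPD
      rw [totalDegree_mul_of_isDomain hX h0, totalDegree_X_pow_card_sub_X] at this
      omega
    have h1 := homogeneousComponent_mul_of_isHomogeneous (isHomogeneous_X_pow i q) (h i) (D - q)
    have h2 := homogeneousComponent_mul_of_isHomogeneous (isHomogeneous_X K i) (h i) (D - 1)
    rw [Nat.add_sub_cancel' hqD] at h1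
    rw [Nat.add_sub_cancel' (by omega), hlow, mul_zero] at h2
    rw [sub_mul, map_sub, h1, h2, sub_zero]
  refine ⟨h.sum fun i a => X i * homogeneousComponent (D - q) a,
    IsHomogeneous.sum _ _ _ fun i _ => ?_, fun x => ?_⟩
  · convert (isHomogeneous_X K i).mul (homogeneousComponent_isHomogeneous (D - q) (h i)) using 1
    omega
  · rw [hPh]
    simp only [Finsupp.linearCombination_apply, Finsupp.sum, smul_eq_mul, map_sum,
      mul_comm (h _), hcomp, map_mul, map_pow, eval_X, FiniteField.pow_card]

end FiniteField

end MvPolynomial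

section ProjectiveLine

variable {F : Type*} [Field F]

/-- Affine coordinate first, as in `Polynomial.homogenize`: `p.homogenize n` takes the value
`p.eval a` at `(a, 1)`. -/
def lineCoord : Option F → Fin 2 → F
  | some a => ![a, 1]
  | none => ![1, 0]

noncomputable def lineEval : MvPolynomial (Fin 2) F →ₗ[F] (Option F → F) :=
  LinearMap.pi fun o => (aeval (lineCoord o)).toLinearMap

@[simp]
theorem lineEval_apply (h : MvPolynomial (Fin 2) F) (o : Option F) :
    lineEval h o = eval (lineCoord o) h := by
  simp [lineEval, aeval_eq_eval]

noncomputable def lineCode (F : Type*) [Field F] (n : ℕ) : Submodule F (Option F → F) :=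
  (homogeneousSubmodule (Fin 2) F n).map lineEval

noncomputable def lineValues (n : ℕ) : Polynomial F →ₗ[F] (Option F → F) :=
  LinearMap.pi fun o => o.elim (Polynomial.lcoeff F n) Polynomial.leval

@[simp]
theorem lineValues_some (n : ℕ) (p : Polynomial F) (a : F) :
    lineValues n p (some a) = p.eval a :=
  rfl

@[simp]
theorem lineValues_none (n : ℕ) (p : Polynomial F) : lineValues n p none = p.coeff n :=
  rfl

theorem lineEval_homogenize {p : Polynomial F} {n : ℕ} (hp : p.natDegree ≤ n) :
    lineEval (p.homogenize n) = lineValues n p := by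
  funext o
  cases o with
  | some a =>
    simpa [lineCoord, aeval_eq_eval] using Polynomial.aeval_homogenize_of_eq_one hp ![a, 1] rfl
  | none => simpa [lineCoord] using Polynomial.eval_homogenize_one_zero p n

theorem MvPolynomial.IsHomogeneous.exists_homogenize_eq {h : MvPolynomial (Fin 2) F} {n : ℕ}
    (hh : h.IsHomogeneous n) : ∃ p : Polynomial F, p.natDegree ≤ n ∧ p.homogenize n = h := by
  refine ⟨MvPolynomial.aeval ![Polynomial.X, 1] h, ?_,
    Polynomial.homogenize_eq_of_isHomogeneous hh rfl⟩
  refine IsHomogeneous.induction_on' hh (fun m c hm => ?_) (fun ψ χ hψ hχ => ?_) (by simp)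
  · rw [aeval_monomial, Finsupp.prod_fintype _ _ (by simp), Fin.prod_univ_two]
    simp only [Matrix.cons_val_zero, Matrix.cons_val_one, Matrix.cons_val_fin_one, one_pow,
      mul_one, Polynomial.algebraMap_eq]
    refine (Polynomial.natDegree_C_mul_X_pow_le c (m 0)).trans ?_
    rw [← hm, Finsupp.degree_eq_sum, Fin.sum_univ_two]
    omega
  · rw [map_add]
    exact (Polynomial.natDegree_add_le _ _).trans (max_le hψ hχ)

theorem lineCode_eq_map_lineValues (n : ℕ) :
    lineCode F n = (Polynomial.degreeLT F (n + 1)).map (lineValues n) := by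
  ext φ
  constructor
  · rintro ⟨h, hh, rfl⟩
    obtain ⟨p, hp, rfl⟩ := IsHomogeneous.exists_homogenize_eq hh
    exact ⟨p, Polynomial.mem_degreeLT_succ.mpr hp, (lineEval_homogenize hp).symm⟩
  · rintro ⟨p, hp, rfl⟩
    have hp := Polynomial.mem_degreeLT_succ.mp hp
    exact ⟨p.homogenize n, Polynomial.isHomogeneous_homogenize p, lineEval_homogenize hp⟩

theorem MvPolynomial.IsHomogeneous.eval_eq_zero_of_lineEval_eq_zero
    {h : MvPolynomial (Fin 2) F} {n : ℕ} (hh : h.IsHomogeneous n) (h0 : lineEval h = 0)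
    (w : Fin 2 → F) : eval w h = 0 := by
  have hline : ∀ o, eval (lineCoord o) h = 0 := fun o => by simpa using congrFun h0 o
  by_cases hw : w 1 = 0
  · have hw' : w = w 0 • lineCoord none := by
      funext i; fin_cases i <;> simp [lineCoord, hw]
    rw [hw', hh.eval_smul, hline, mul_zero]
  · have hw' : w = w 1 • lineCoord (some (w 0 / w 1)) := by
      funext i; fin_cases i <;> simp [lineCoord, mul_div_cancel₀ _ hw]
    rw [hw', hh.eval_smul, hline, mul_zero]

variable [Fintype F]

local notation "q" => Fintype.card F

theorem eq_zero_of_lineValues_eq_zero {n : ℕ} (hn : n < q) {p : Polynomial F}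
    (hp : p.natDegree ≤ n) (h0 : lineValues n p = 0) : p = 0 :=
  Polynomial.eq_zero_of_natDegree_lt_card_of_eval_eq_zero p Function.injective_id
    (fun a => by simpa using congrFun h0 (some a)) (by omega)

theorem finrank_map_lineValues {n k : ℕ} (hk : k ≤ n + 1) (hn : n < q) :
    Module.finrank F ((Polynomial.degreeLT F k).map (lineValues n)) = k := by
  have h := Submodule.finrank_map_add_finrank_inf_ker (lineValues n) (Polynomial.degreeLT F k)
  have hker : Polynomial.degreeLT F k ⊓ LinearMap.ker (lineValues n) = ⊥ :=
    (Submodule.eq_bot_iff _).mpr fun p ⟨hpk, hp0⟩ => eq_zero_of_lineValues_eq_zero hn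
      (Polynomial.mem_degreeLT_succ.mp (Polynomial.degreeLT_mono hk hpk)) hp0
  rwa [hker, finrank_bot, add_zero, (Polynomial.degreeLTEquiv F k).finrank_eq,
    Module.finrank_fin_fun] at h

theorem finrank_lineCode {n : ℕ} (hn : n < q) : Module.finrank F (lineCode F n) = n + 1 := by
  rw [lineCode_eq_map_lineValues, finrank_map_lineValues le_rfl hn]

theorem lineCode_eq_top {n : ℕ} (hn : q ≤ n) : lineCode F n = ⊤ := by
  classical
  refine eq_top_iff.mpr fun φ _ => ?_
  obtain ⟨r, hr, hr_eval⟩ : ∃ r : Polynomial F, r.degree < q ∧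
      ∀ a, r.eval a = φ (some a) - φ none * a ^ n :=
    ⟨Lagrange.interpolate Finset.univ id fun a => φ (some a) - φ none * a ^ n,
      (Lagrange.degree_interpolate_lt _ (Set.injOn_id _)).trans_eq (by rw [Finset.card_univ]),
      fun a => Lagrange.eval_interpolate_at_node _ (Set.injOn_id _) (Finset.mem_univ a)⟩
  have hrn : r.natDegree < n := by
    rcases eq_or_ne r 0 with rfl | hr0
    · simpa using (Fintype.card_pos (α := F)).trans_le hn
    · exact ((Polynomial.natDegree_lt_iff_degree_lt hr0).mpr hr).trans_le hn
  rw [lineCode_eq_map_lineValues]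
  refine ⟨Polynomial.C (φ none) * Polynomial.X ^ n + r, Polynomial.mem_degreeLT_succ.mpr ?_, ?_⟩
  · exact (Polynomial.natDegree_add_le _ _).trans
      (max_le (Polynomial.natDegree_C_mul_X_pow_le _ _) hrn.le)
  · funext o
    cases o with
    | none => simp [Polynomial.coeff_eq_zero_of_natDegree_lt hrn]
    | some a => simp [hr_eval]

theorem lineCode_inf_lineCode {c D : ℕ} (hcD : c < D) (hD : D < q) :
    lineCode F c ⊓ lineCode F D = (Polynomial.degreeLT F c).map (lineValues c) := by
  rw [lineCode_eq_map_lineValues, lineCode_eq_map_lineValues]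
  apply le_antisymm
  · rintro φ ⟨⟨p, hp, rfl⟩, ⟨p', hp', hpp'⟩⟩
    rw [SetLike.mem_coe, Polynomial.mem_degreeLT_succ] at hp hp'
    obtain rfl : p' = p := Polynomial.eq_of_natDegree_lt_card_of_eval_eq p' p
      Function.injective_id (fun a => by simpa using congrFun hpp' (some a)) (by omega)
    have hc : p'.coeff c = 0 := by
      simpa [Polynomial.coeff_eq_zero_of_natDegree_lt (hp.trans_lt hcD)] using
        (congrFun hpp' none).symm
    refine ⟨p', ?_, rfl⟩
    rw [SetLike.mem_coe, Polynomial.mem_degreeLT, Polynomial.degree_lt_iff_coeff_zero]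
    intro m hm
    rcases hm.eq_or_lt with rfl | hm
    · exact hc
    · exact Polynomial.coeff_eq_zero_of_natDegree_lt (hp.trans_lt hm)
  · rintro φ ⟨p, hp, rfl⟩
    have hcoeff := (Polynomial.degree_lt_iff_coeff_zero p c).mp (Polynomial.mem_degreeLT.mp hp)
    have hpc := Polynomial.mem_degreeLT_succ.mp (Polynomial.degreeLT_mono c.le_succ hp)
    refine ⟨⟨p, Polynomial.mem_degreeLT_succ.mpr hpc, rfl⟩,
      ⟨p, Polynomial.mem_degreeLT_succ.mpr (by omega), ?_⟩⟩
    funext o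
    cases o with
    | none => simp [hcoeff c le_rfl, hcoeff D hcD.le]
    | some a => rfl

theorem finrank_lineCode_inf_lineCode {c D : ℕ} (hcD : c ≠ D) (hc : c < q) (hD : D < q) :
    Module.finrank F ↥(lineCode F c ⊓ lineCode F D) = min c D := by
  rcases hcD.lt_or_gt with h | h
  · rw [lineCode_inf_lineCode h hD, finrank_map_lineValues (by omega) hc, min_eq_left h.le]
  · rw [inf_comm, lineCode_inf_lineCode h hc, finrank_map_lineValues (by omega) hD,
      min_eq_right h.le]

end ProjectiveLine

section ProjectivePlane

variable {F : Type*} [Field F]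

/-- The coordinates of `F²` are listed as `(x₂, x₁)`, so that on the line `x₀ = 0` they match
`lineCoord`. -/
def affinePoint (p : Fin 2 → F) : stdRep F := ⟨![1, p 1, p 0], Or.inl rfl⟩

def linePoint : Option F → stdRep F
  | some a => ⟨![0, 1, a], Or.inr (Or.inl ⟨rfl, rfl⟩)⟩
  | none => ⟨![0, 0, 1], Or.inr (Or.inr ⟨rfl, rfl, rfl⟩)⟩

theorem coe_affinePoint (p : Fin 2 → F) : (affinePoint p : Fin 3 → F) = ![1, p 1, p 0] := rfl

theorem coe_linePoint (o : Option F) :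
    (linePoint o : Fin 3 → F) = ![0, lineCoord o 1, lineCoord o 0] := by
  cases o <;> rfl

theorem stdRep_eq_affinePoint_or_linePoint (v : stdRep F) :
    (∃ p, v = affinePoint p) ∨ ∃ o, v = linePoint o := by
  obtain ⟨w, h | ⟨h0, h1⟩ | ⟨h0, h1, h2⟩⟩ := v
  · refine Or.inl ⟨![w 2, w 1], Subtype.ext ?_⟩
    funext i; fin_cases i <;> simp [affinePoint, h]
  · refine Or.inr ⟨some (w 2), Subtype.ext ?_⟩
    funext i; fin_cases i <;> simp [linePoint, h0, h1]
  · refine Or.inr ⟨none, Subtype.ext ?_⟩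
    funext i; fin_cases i <;> simp [linePoint, h0, h1, h2]

noncomputable def restrictAffine : (stdRep F → F) →ₗ[F] ((Fin 2 → F) → F) :=
  LinearMap.funLeft F F affinePoint

noncomputable def restrictLine : (stdRep F → F) →ₗ[F] (Option F → F) :=
  LinearMap.funLeft F F linePoint

@[simp]
theorem restrictAffine_apply (u : stdRep F → F) (p : Fin 2 → F) :
    restrictAffine u p = u (affinePoint p) := rfl

@[simp]
theorem restrictLine_apply (u : stdRep F → F) (o : Option F) :
    restrictLine u o = u (linePoint o) := rfl

theorem restrict_ext {u u' : stdRep F → F} (hA : restrictAffine u = restrictAffine u')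
    (hL : restrictLine u = restrictLine u') : u = u' := by
  funext v
  rcases stdRep_eq_affinePoint_or_linePoint v with ⟨p, rfl⟩ | ⟨o, rfl⟩
  exacts [congrFun hA p, congrFun hL o]

theorem ker_restrictAffine_inf_ker_restrictLine :
    LinearMap.ker (restrictAffine (F := F)) ⊓ LinearMap.ker restrictLine = ⊥ :=
  (Submodule.eq_bot_iff _).mpr fun _ ⟨hA, hL⟩ =>
    restrict_ext (hA.trans (map_zero _).symm) (hL.trans (map_zero _).symm)

@[simp]
theorem ev_apply (f : MvPolynomial (Fin 3) F) (v : stdRep F) :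
    ev F f v = eval (v : Fin 3 → F) f := by
  simp [ev, aeval_eq_eval]

@[simp]
theorem evA_apply (g : MvPolynomial (Fin 2) F) (p : Fin 2 → F) : evA F g p = eval p g := by
  simp [evA, aeval_eq_eval]

noncomputable def dehomogenize (t : F) : MvPolynomial (Fin 3) F →ₐ[F] MvPolynomial (Fin 2) F :=
  aeval ![C t, X 1, X 0]

theorem eval_dehomogenize (t : F) (w : Fin 2 → F) (f : MvPolynomial (Fin 3) F) :
    eval w (dehomogenize t f) = aeval ![t, w 1, w 0] f := by
  rw [← aeval_eq_eval, ← AlgHom.comp_apply, dehomogenize, comp_aeval]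
  congr 2
  funext i; fin_cases i <;> simp

theorem dehomogenize_monomial (t : F) (m : Fin 3 →₀ ℕ) (c : F) :
    dehomogenize t (monomial m c) = C (c * t ^ m 0) * (X 1 ^ m 1 * X 0 ^ m 2) := by
  rw [dehomogenize, aeval_monomial, Finsupp.prod_fintype _ _ (by simp), Fin.prod_univ_three]
  simp
  ring

theorem MvPolynomial.IsHomogeneous.totalDegree_dehomogenize_le {f : MvPolynomial (Fin 3) F}
    {d : ℕ} (hf : f.IsHomogeneous d) (t : F) : (dehomogenize t f).totalDegree ≤ d := by
  refine IsHomogeneous.induction_on' hf (fun m c hm => ?_) (fun ψ χ hψ hχ => ?_) (by simp)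
  · rw [dehomogenize_monomial]
    refine (((isHomogeneous_X_pow _ _).mul (isHomogeneous_X_pow _ _)).C_mul _).totalDegree_le.trans
      ?_
    rw [← hm, Finsupp.degree_eq_sum, Fin.sum_univ_three]
    omega
  · rw [map_add]
    exact (totalDegree_add _ _).trans (max_le hψ hχ)

theorem MvPolynomial.IsHomogeneous.homogeneousComponent_dehomogenize_one
    {f : MvPolynomial (Fin 3) F} {d : ℕ} (hf : f.IsHomogeneous d) :
    homogeneousComponent d (dehomogenize 1 f) = dehomogenize 0 f := by
  refine IsHomogeneous.induction_on' hf (fun m c hm => ?_) (fun ψ χ hψ hχ => ?_) (by simp)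
  · rw [dehomogenize_monomial, dehomogenize_monomial, homogeneousComponent_C_mul,
      homogeneousComponent_of_mem ((isHomogeneous_X_pow _ _).mul (isHomogeneous_X_pow _ _)),
      ← hm, Finsupp.degree_eq_sum, Fin.sum_univ_three]
    rcases Nat.eq_zero_or_pos (m 0) with h0 | h0
    · rw [if_pos (by omega)]
      simp [h0]
    · rw [if_neg (by omega)]
      simp [zero_pow h0.ne']
  · simp only [map_add, hψ, hχ]

noncomputable def homogenization (d : ℕ) (g : MvPolynomial (Fin 2) F) : MvPolynomial (Fin 3) F :=
  ∑ k ∈ Finset.range (d + 1), X 0 ^ (d - k) * rename ![2, 1] (homogeneousComponent k g)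

theorem isHomogeneous_homogenization (d : ℕ) (g : MvPolynomial (Fin 2) F) :
    (homogenization d g).IsHomogeneous d := by
  refine IsHomogeneous.sum _ _ _ fun k hk => ?_
  convert (isHomogeneous_X_pow (0 : Fin 3) (d - k)).mul
    ((homogeneousComponent_isHomogeneous k g).rename_isHomogeneous (f := ![2, 1])) using 1
  simp at hk
  omega

theorem aeval_homogenization (d : ℕ) (g : MvPolynomial (Fin 2) F) (t : F) (w : Fin 2 → F) :
    aeval ![t, w 1, w 0] (homogenization d g)
      = ∑ k ∈ Finset.range (d + 1), t ^ (d - k) * eval w (homogeneousComponent k g) := by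
  have hw : ![t, w 1, w 0] ∘ ![(2 : Fin 3), 1] = w := by
    funext i; fin_cases i <;> rfl
  simp [homogenization, aeval_eq_eval, eval_rename, hw]

theorem exists_of_mem_PRM {d : ℕ} {u : stdRep F → F} (hu : u ∈ PRM F d) :
    ∃ g : MvPolynomial (Fin 2) F, g.totalDegree ≤ d ∧ restrictAffine u = evA F g ∧
      restrictLine u = lineEval (homogeneousComponent d g) := by
  obtain ⟨f, hf, rfl⟩ := hu
  refine ⟨dehomogenize 1 f, hf.totalDegree_dehomogenize_le 1, ?_, ?_⟩
  · funext p
    simp [coe_affinePoint, eval_dehomogenize, aeval_eq_eval]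
  · rw [IsHomogeneous.homogeneousComponent_dehomogenize_one hf]
    funext o
    simp [coe_linePoint, eval_dehomogenize, aeval_eq_eval]

theorem exists_mem_PRM_restrict_eq {d : ℕ} {g : MvPolynomial (Fin 2) F} (hg : g.totalDegree ≤ d) :
    ∃ u ∈ PRM F d, restrictAffine u = evA F g ∧
      restrictLine u = lineEval (homogeneousComponent d g) := by
  refine ⟨ev F (homogenization d g), ⟨_, isHomogeneous_homogenization d g, rfl⟩, ?_, ?_⟩
  · funext p
    rw [restrictAffine_apply, ev_apply, coe_affinePoint, ← aeval_eq_eval, aeval_homogenization]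
    simp [← map_sum, sum_homogeneousComponent_of_totalDegree_le hg]
  · funext o
    rw [restrictLine_apply, ev_apply, coe_linePoint, ← aeval_eq_eval, aeval_homogenization,
      Finset.sum_eq_single d (fun k hk hkd => by simp at hk; simp [zero_pow (by omega : d - k ≠ 0)])
        (by simp)]
    simp

theorem mem_PRM_iff {d : ℕ} {u : stdRep F → F} :
    u ∈ PRM F d ↔ ∃ g : MvPolynomial (Fin 2) F, g.totalDegree ≤ d ∧
      restrictAffine u = evA F g ∧ restrictLine u = lineEval (homogeneousComponent d g) := by
  refine ⟨exists_of_mem_PRM, fun ⟨g, hg, hA, hL⟩ => ?_⟩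
  obtain ⟨u', hu', hA', hL'⟩ := exists_mem_PRM_restrict_eq hg
  rwa [restrict_ext (hA.trans hA'.symm) (hL.trans hL'.symm)]

theorem restrictLine_mem_lineCode {d : ℕ} {u : stdRep F → F} (hu : u ∈ PRM F d) :
    restrictLine u ∈ lineCode F d := by
  obtain ⟨g, -, -, hL⟩ := exists_of_mem_PRM hu
  exact hL ▸ ⟨_, homogeneousComponent_isHomogeneous d g, rfl⟩

theorem map_restrictAffine_PRM_inf_PRM_inf_ker {d₁ d₂ : ℕ} (h1 : d₁ ≠ 0) (h12 : d₁ ≤ d₂) :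
    (PRM F d₁ ⊓ PRM F d₂ ⊓ LinearMap.ker restrictLine).map restrictAffine = RM F (d₁ - 1) := by
  apply le_antisymm
  · rintro _ ⟨u, ⟨⟨hu₁, -⟩, hu0⟩, rfl⟩
    obtain ⟨g, hg, hA, hL⟩ := exists_of_mem_PRM hu₁
    have htop : ∀ w, eval w (homogeneousComponent d₁ g) = 0 :=
      (homogeneousComponent_isHomogeneous d₁ g).eval_eq_zero_of_lineEval_eq_zero (hL ▸ hu0)
    have hlow : g - homogeneousComponent d₁ g =
        ∑ k ∈ Finset.range d₁, homogeneousComponent k g := by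
      rw [sub_eq_iff_eq_add, ← Finset.sum_range_succ, sum_homogeneousComponent_of_totalDegree_le hg]
    refine ⟨g - homogeneousComponent d₁ g, (mem_restrictTotalDegree _ _ _).mpr ?_, ?_⟩
    · rw [hlow]
      refine (totalDegree_finsetSum _ _).trans (Finset.sup_le fun k hk => ?_)
      exact (homogeneousComponent_isHomogeneous k g).totalDegree_le.trans (by simp at hk; omega)
    · rw [hA]
      funext p
      simp [htop]
  · rintro _ ⟨g, hg, rfl⟩
    rw [SetLike.mem_coe, mem_restrictTotalDegree] at hg
    have hzero : ∀ d, d₁ ≤ d → homogeneousComponent d g = 0 :=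
      fun d hd => homogeneousComponent_eq_zero _ _ (by omega)
    obtain ⟨u, hu₁, hA, hL⟩ := exists_mem_PRM_restrict_eq (d := d₁) (g := g) (by omega)
    rw [hzero d₁ le_rfl, map_zero] at hL
    refine ⟨u, ⟨⟨hu₁, mem_PRM_iff.mpr ⟨g, by omega, hA, ?_⟩⟩, hL⟩, hA⟩
    rw [hL, hzero d₂ h12, map_zero]

variable [Fintype F]

local notation "q" => Fintype.card F

theorem PRM_le_PRM_add_card_sub_one {d : ℕ} (hd : d ≠ 0) : PRM F d ≤ PRM F (d + (q - 1)) := by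
  rintro _ ⟨f, hf, rfl⟩
  obtain ⟨f', hf', hff'⟩ := IsHomogeneous.exists_isHomogeneous_add_card_sub_one_eval_eq hf hd
  exact ⟨f', hf', funext fun v => by simp [hff']⟩

theorem PRM_le_PRM_of_modEq {d d' : ℕ} (hd : d ≠ 0) (hdd' : d ≤ d')
    (hmod : d ≡ d' [MOD q - 1]) : PRM F d ≤ PRM F d' := by
  obtain ⟨k, hk⟩ := (Nat.modEq_iff_dvd' hdd').mp hmod
  have hstep : ∀ k, PRM F d ≤ PRM F (d + (q - 1) * k) := by
    intro k
    induction k with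
    | zero => simp
    | succ k ih =>
      rw [mul_add_one, ← add_assoc]
      exact ih.trans (PRM_le_PRM_add_card_sub_one (by omega))
  rw [show d' = d + (q - 1) * k by omega]
  exact hstep k

theorem mem_PRM_of_restrictLine_mem_lineCode {D : ℕ} (hqD : q ≤ D) {u : stdRep F → F}
    {g : MvPolynomial (Fin 2) F} (hg : g.totalDegree < D) (hA : restrictAffine u = evA F g)
    (hL : restrictLine u ∈ lineCode F (D - (q - 1))) : u ∈ PRM F D := by
  have hq : 2 ≤ q := Fintype.one_lt_card
  obtain ⟨k, hk, hkL⟩ := hL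
  obtain ⟨k', hk', hkk'⟩ :=
    IsHomogeneous.exists_isHomogeneous_add_card_sub_one_eval_eq hk (by omega)
  rw [Nat.sub_add_cancel (by omega)] at hk'
  refine mem_PRM_iff.mpr ⟨g + (k' - k), ?_, ?_, ?_⟩
  · exact (totalDegree_add _ _).trans (max_le hg.le ((totalDegree_sub _ _).trans
      (max_le hk'.totalDegree_le (hk.totalDegree_le.trans (by omega)))))
  · funext p
    simpa [hkk'] using congrFun hA p
  · rw [map_add, map_sub, homogeneousComponent_eq_zero _ _ hg, homogeneousComponent_eq_self hk',
      homogeneousComponent_of_mem hk, if_neg (by omega), zero_add, sub_zero, ← hkL]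
    funext o
    simp [hkk']

theorem finrank_PRM_inf_PRM {d₁ d₂ : ℕ} (h1 : d₁ ≠ 0) (h12 : d₁ ≤ d₂) :
    Module.finrank F ↥(PRM F d₁ ⊓ PRM F d₂) = Module.finrank F (RM F (d₁ - 1)) +
      Module.finrank F ↥((PRM F d₁ ⊓ PRM F d₂).map restrictLine) := by
  set I := PRM F d₁ ⊓ PRM F d₂
  have hL := Submodule.finrank_map_add_finrank_inf_ker restrictLine I
  have hA := Submodule.finrank_map_add_finrank_inf_ker restrictAffine
    (I ⊓ LinearMap.ker restrictLine)
  have hbot : I ⊓ LinearMap.ker restrictLine ⊓ LinearMap.ker restrictAffine = ⊥ :=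
    eq_bot_iff.mpr ((le_inf inf_le_right (inf_le_left.trans inf_le_right)).trans
      ker_restrictAffine_inf_ker_restrictLine.le)
  rw [map_restrictAffine_PRM_inf_PRM_inf_ker h1 h12, hbot, finrank_bot, add_zero] at hA
  omega

theorem map_restrictLine_PRM_inf_PRM_eq_bot {d₁ d₂ : ℕ} (h12 : d₁ < d₂) (hd₂ : d₂ < q) :
    (PRM F d₁ ⊓ PRM F d₂).map restrictLine = ⊥ := by
  refine eq_bot_iff.mpr ?_
  rintro _ ⟨u, ⟨hu₁, hu₂⟩, rfl⟩
  obtain ⟨g₁, hg₁, hA₁, -⟩ := exists_of_mem_PRM hu₁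
  obtain ⟨g₂, hg₂, hA₂, hL₂⟩ := exists_of_mem_PRM hu₂
  have hg : g₂ - g₁ = 0 := eq_zero_of_eval_eq_zero_of_totalDegree_lt
    (fun x => by simpa [sub_eq_zero] using congrFun (hA₂.symm.trans hA₁) x)
    ((totalDegree_sub _ _).trans_lt (max_lt (by omega) (by omega)))
  rw [Submodule.mem_bot, hL₂, sub_eq_zero.mp hg, homogeneousComponent_eq_zero _ _ (by omega),
    map_zero]

theorem map_restrictLine_PRM_inf_PRM {d₁ d₂ : ℕ} (h12 : d₁ < d₂) (hqd : q ≤ d₂) :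
    (PRM F d₁ ⊓ PRM F d₂).map restrictLine = lineCode F d₁ ⊓ lineCode F (d₂ - (q - 1)) := by
  apply le_antisymm
  · rintro _ ⟨u, ⟨hu₁, hu₂⟩, rfl⟩
    refine ⟨restrictLine_mem_lineCode hu₁, ?_⟩
    obtain ⟨g₁, hg₁, hA₁, -⟩ := exists_of_mem_PRM hu₁
    obtain ⟨g₂, hg₂, hA₂, hL₂⟩ := exists_of_mem_PRM hu₂
    obtain ⟨H, hH, hHeval⟩ := exists_isHomogeneous_eval_homogeneousComponent_eq
      (fun x => by simpa [sub_eq_zero] using congrFun (hA₂.symm.trans hA₁) x)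
      ((totalDegree_sub _ _).trans (max_le hg₂ (by omega))) hqd
    refine ⟨H, hH, ?_⟩
    rw [hL₂]
    funext o
    simp [← hHeval, homogeneousComponent_eq_zero _ g₁ (by omega : g₁.totalDegree < d₂)]
  · rintro φ ⟨⟨h, hh, rfl⟩, hφ⟩
    obtain ⟨u, hu₁, hA, hL⟩ := exists_mem_PRM_restrict_eq hh.totalDegree_le
    rw [homogeneousComponent_eq_self hh] at hL
    exact ⟨u, ⟨hu₁, mem_PRM_of_restrictLine_mem_lineCode hqd (hh.totalDegree_le.trans_lt h12) hA
      (hL ▸ hφ)⟩, hL⟩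

end ProjectivePlane

/-- the dimension of `PRM_{d₁}(q,2) ∩ PRM_{d₂}(q,2)`. -/
theorem stmt7 {F : Type*} [Field F] [Fintype F] (q d₁ d₂ : ℕ)
    (hq : Fintype.card F = q) (h1 : 1 ≤ d₁) (h12 : d₁ < d₂) (h2 : d₂ ≤ 2 * (q - 1)) :
    (d₁ ≡ d₂ [MOD q - 1] →
      Module.finrank F ↥(PRM F d₁ ⊓ PRM F d₂) = Module.finrank F ↥(PRM F d₁)) ∧
    (¬ d₁ ≡ d₂ [MOD q - 1] →
      ((d₂ ≤ q - 1 →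
        Module.finrank F ↥(PRM F d₁ ⊓ PRM F d₂) = Module.finrank F ↥(RM F (d₁ - 1))) ∧
      (d₁ ≤ q - 1 ∧ q - 1 < d₂ →
        Module.finrank F ↥(PRM F d₁ ⊓ PRM F d₂) =
          Module.finrank F ↥(RM F (d₁ - 1)) + min d₁ (d₂ - (q - 1))) ∧
      (q ≤ d₁ →
        Module.finrank F ↥(PRM F d₁ ⊓ PRM F d₂) =
          Module.finrank F ↥(RM F (d₁ - 1)) + d₂ - q + 2))) := by
  subst hq
  have hsplit := finrank_PRM_inf_PRM (F := F) (by omega : d₁ ≠ 0) h12.le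
  refine ⟨fun hmod => ?_, fun hmod => ⟨fun hd₂ => ?_, fun ⟨hd₁, hd₂⟩ => ?_, fun hd₁ => ?_⟩⟩
  · rw [inf_eq_left.mpr (PRM_le_PRM_of_modEq (by omega) h12.le hmod)]
  · rw [hsplit, map_restrictLine_PRM_inf_PRM_eq_bot h12 (by omega), finrank_bot, add_zero]
  · have hne : d₁ ≠ d₂ - (Fintype.card F - 1) :=
      fun h => hmod ((Nat.modEq_iff_dvd' h12.le).mpr ⟨1, by omega⟩)
    rw [hsplit, map_restrictLine_PRM_inf_PRM h12 (by omega),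
      finrank_lineCode_inf_lineCode hne (by omega) (by omega)]
  · rw [hsplit, map_restrictLine_PRM_inf_PRM h12 (by omega), lineCode_eq_top hd₁, top_inf_eq,
      finrank_lineCode (by omega)]
    omega
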